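/- Let φ be a 3-CNF formula with clauses C₁,…,C_m (each clause a disjunction of at most 3 literals, no literal repeated in a clause, no clause containing both a literal and its negation, and every variable occurring in some clause). Construct the graph G as follows: for each clause C_i = ℓ_{i,1} ∨ ℓ_{i,2} ∨ ℓ_{i,3}, create a triangle on vertices v_{i,1}, v_{i,2}, v_{i,3} labeled with the corresponding literals; additionally, for any two vertices u (in triangle T) and v (in triangle T') from different triangles: if ℓ(u) = ℓ(v), add edges from u to the two other vertices of T' and from v to the two other vertices of T; if ℓ(u) = ¬ℓ(v), add the edge uv and all four edges between the two other vertices of T and the two other vertices of T'. Then the number of assignments of the variables of φ under which exactly one literal in every clause is true equals the number of independent sets of size exactly m in G. -/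
import Mathlib


open Finset
open scoped Classical

/-- A literal over `n` Boolean variables: a variable together with a sign. -/
structure Lit (n : ℕ) where
  var : Fin n
  pos : Bool
deriving DecidableEq

/-- The negation of a literal. -/
def Lit.neg {n : ℕ} (l : Lit n) : Lit n := ⟨l.var, !l.pos⟩

/-- Evaluation of a literal under a truth assignment. -/
def Lit.eval {n : ℕ} (σ : Fin n → Bool) (l : Lit n) : Bool :=
  if l.pos then σ l.var else !(σ l.var)

/-- A finset of vertices is independent in `G` if no two of its members are adjacent. -/
def IndepSet {V : Type*} (G : SimpleGraph V) (A : Finset V) : Prop :=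
  ∀ u ∈ A, ∀ v ∈ A, ¬ G.Adj u v

/-- The clause-triangle graph of a 3-CNF formula `φ` with `m` clauses of three literals:
one triangle per clause; for vertices `u, v` in different triangles, if `ℓ(u) = ℓ(v)` then
`u` is joined to the other two vertices of `v`'s triangle (and symmetrically), and if
`ℓ(u) = ¬ℓ(v)` then `u` is joined to `v` and the other two vertices of `u`'s triangle are
joined to the other two vertices of `v`'s triangle. -/
def clauseGraph {n m : ℕ} (φ : Fin m → Fin 3 → Lit n) :
    SimpleGraph (Fin m × Fin 3) :=
  SimpleGraph.fromRel (fun u v =>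
    (u.1 = v.1 ∧ u.2 ≠ v.2) ∨
    (u.1 ≠ v.1 ∧ (
      (∃ j : Fin 3, j ≠ v.2 ∧ φ v.1 j = φ u.1 u.2) ∨
      (φ u.1 u.2 = (φ v.1 v.2).neg) ∨
      (∃ j j' : Fin 3, j ≠ u.2 ∧ j' ≠ v.2 ∧ φ u.1 j = (φ v.1 j').neg))))

namespace X3Sat

lemma Lit.eval_eq_true_iff {n : ℕ} (σ : Fin n → Bool) (l : Lit n) :
    l.eval σ = true ↔ σ l.var = l.pos := by
  cases h : l.pos <;> simp [Lit.eval, h]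

lemma Lit.eval_neg {n : ℕ} (σ : Fin n → Bool) (l : Lit n) :
    l.neg.eval σ = !(l.eval σ) := by
  cases h : l.pos <;> simp [Lit.eval, Lit.neg, h]

lemma Lit.eq_iff {n : ℕ} (l l' : Lit n) : l = l' ↔ l.var = l'.var ∧ l.pos = l'.pos := by
  cases l; cases l'; simp [Lit.mk.injEq]

variable {n m : ℕ} (φ : Fin m → Fin 3 → Lit n)

def rel' (u v : Fin m × Fin 3) : Prop :=
  (u.1 = v.1 ∧ u.2 ≠ v.2) ∨
    (u.1 ≠ v.1 ∧ (
      (∃ j : Fin 3, j ≠ v.2 ∧ φ v.1 j = φ u.1 u.2) ∨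
      (φ u.1 u.2 = (φ v.1 v.2).neg) ∨
      (∃ j j' : Fin 3, j ≠ u.2 ∧ j' ≠ v.2 ∧ φ u.1 j = (φ v.1 j').neg)))

lemma clauseGraph_adj {u v : Fin m × Fin 3} :
    (clauseGraph φ).Adj u v ↔ u ≠ v ∧ (rel' φ u v ∨ rel' φ v u) := by
  rw [clauseGraph, SimpleGraph.fromRel_adj]; rfl

/-! ### Forward direction -/

def fwdSet (σ : Fin n → Bool) : Finset (Fin m × Fin 3) :=
  Finset.univ.filter (fun p => (φ p.1 p.2).eval σ = true)

lemma mem_fwdSet {σ : Fin n → Bool} {p : Fin m × Fin 3} :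
    p ∈ fwdSet φ σ ↔ (φ p.1 p.2).eval σ = true := by
  simp [fwdSet]

lemma fwd_norel {σ : Fin n → Bool}
    (hσ : ∀ i : Fin m, ∃! j : Fin 3, (φ i j).eval σ = true)
    {u v : Fin m × Fin 3} (hu : (φ u.1 u.2).eval σ = true)
    (hv : (φ v.1 v.2).eval σ = true) (hne : u ≠ v) : ¬ rel' φ u v := by
  rintro (⟨h1, h2⟩ | ⟨h1, hcase⟩)
  · have hv' : (φ u.1 v.2).eval σ = true := by rw [h1]; exact hv
    exact h2 (((hσ u.1).unique hu hv').symm ▸ rfl)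
  · rcases hcase with ⟨k, hk, heq⟩ | heq | ⟨k, k', hk, hk', heq⟩
    · have hk2 : (φ v.1 k).eval σ = true := by rw [heq]; exact hu
      exact hk ((hσ v.1).unique hk2 hv)
    · rw [heq, Lit.eval_neg, hv] at hu; simp at hu
    · have h1' : (φ u.1 k).eval σ = false := by
        by_contra h
        exact hk ((hσ u.1).unique (by simpa using h) hu)
      have h2' : (φ v.1 k').eval σ = false := by
        by_contra h
        exact hk' ((hσ v.1).unique (by simpa using h) hv)
      rw [heq, Lit.eval_neg, h2'] at h1'; simp at h1'

lemma fwd_indep {σ : Fin n → Bool}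
    (hσ : ∀ i : Fin m, ∃! j : Fin 3, (φ i j).eval σ = true) :
    IndepSet (clauseGraph φ) (fwdSet φ σ) := by
  intro u hu v hv hadj
  rw [mem_fwdSet] at hu hv
  rw [clauseGraph_adj] at hadj
  obtain ⟨hne, h | h⟩ := hadj
  · exact fwd_norel φ hσ hu hv hne h
  · exact fwd_norel φ hσ hv hu hne.symm h

lemma fwd_card {σ : Fin n → Bool}
    (hσ : ∀ i : Fin m, ∃! j : Fin 3, (φ i j).eval σ = true) :
    (fwdSet φ σ).card = m := by
  have himg : fwdSet φ σ =
      Finset.univ.image (fun i : Fin m => (i, Fintype.choose _ (hσ i))) := by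
    ext p
    simp only [mem_fwdSet, Finset.mem_image, Finset.mem_univ, true_and]
    constructor
    · intro hp
      refine ⟨p.1, ?_⟩
      have := (hσ p.1).unique (Fintype.choose_spec _ (hσ p.1)) hp
      rw [this]
    · rintro ⟨i, rfl⟩
      exact Fintype.choose_spec _ (hσ i)
  rw [himg, Finset.card_image_of_injective _ (fun a b h => congrArg Prod.fst h),
    Finset.card_univ, Fintype.card_fin]

/-! ### Backward direction -/

variable {φ} in
lemma exists_unique_mem {A : Finset (Fin m × Fin 3)}
    (hA : IndepSet (clauseGraph φ) A) (hcard : A.card = m) :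
    ∀ i : Fin m, ∃! j : Fin 3, (i, j) ∈ A := by
  have huniq : ∀ p ∈ A, ∀ q ∈ A, p.1 = q.1 → p = q := by
    intro p hp q hq h1
    by_contra hne
    refine hA p hp q hq ?_
    rw [clauseGraph_adj]
    refine ⟨hne, Or.inl (Or.inl ⟨h1, ?_⟩)⟩
    intro h2
    exact hne (Prod.ext h1 h2)
  have himg : A.image Prod.fst = Finset.univ := by
    apply Finset.eq_univ_of_card
    rw [Finset.card_image_of_injOn (fun p hp q hq h => huniq p hp q hq h),
      hcard, Fintype.card_fin]
  intro i
  have : i ∈ A.image Prod.fst := by rw [himg]; exact Finset.mem_univ i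
  obtain ⟨p, hp, hp1⟩ := Finset.mem_image.mp this
  refine ⟨p.2, by rw [← hp1]; exact hp, ?_⟩
  intro j hj
  have := huniq (i, j) hj p hp (by simp [hp1])
  exact congrArg Prod.snd this ▸ hp1 ▸ rfl

def forced (A : Finset (Fin m × Fin 3)) (p : Fin m × Fin 3) : Bool :=
  if p ∈ A then (φ p.1 p.2).pos else !(φ p.1 p.2).pos

noncomputable def bwdAsg (A : Finset (Fin m × Fin 3)) (x : Fin n) : Bool :=
  decide (∃ p : Fin m × Fin 3, (φ p.1 p.2).var = x ∧ forced φ A p = true)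

variable {φ} in
lemma no_eq_cross {A : Finset (Fin m × Fin 3)}
    (hA : IndepSet (clauseGraph φ) A)
    (hone : ∀ i : Fin m, ∃! j : Fin 3, (i, j) ∈ A)
    {p q : Fin m × Fin 3} (hp : p ∈ A) (hq : q ∉ A) (h1 : p.1 ≠ q.1)
    (hlit : φ p.1 p.2 = φ q.1 q.2) : False := by
  obtain ⟨c, hc, -⟩ := hone q.1
  have hcq : c ≠ q.2 := by rintro rfl; exact hq hc
  refine hA p hp (q.1, c) hc ?_
  rw [clauseGraph_adj]
  exact ⟨by simp [Prod.ext_iff]; intro h; exact absurd h h1,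
    Or.inl (Or.inr ⟨h1, Or.inl ⟨q.2, fun h => hcq h.symm, hlit.symm⟩⟩)⟩

variable {φ} in
lemma no_neg_in {A : Finset (Fin m × Fin 3)}
    (hA : IndepSet (clauseGraph φ) A)
    {p q : Fin m × Fin 3} (hp : p ∈ A) (hq : q ∈ A) (h1 : p.1 ≠ q.1)
    (hlit : φ p.1 p.2 = (φ q.1 q.2).neg) : False := by
  refine hA p hp q hq ?_
  rw [clauseGraph_adj]
  exact ⟨by simp [Prod.ext_iff]; intro h; exact absurd h h1,
    Or.inl (Or.inr ⟨h1, Or.inr (Or.inl hlit)⟩)⟩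

variable {φ} in
lemma no_neg_out {A : Finset (Fin m × Fin 3)}
    (hA : IndepSet (clauseGraph φ) A)
    (hone : ∀ i : Fin m, ∃! j : Fin 3, (i, j) ∈ A)
    {p q : Fin m × Fin 3} (hp : p ∉ A) (hq : q ∉ A) (h1 : p.1 ≠ q.1)
    (hlit : φ p.1 p.2 = (φ q.1 q.2).neg) : False := by
  obtain ⟨a, ha, -⟩ := hone p.1
  obtain ⟨b, hb, -⟩ := hone q.1
  have hap : a ≠ p.2 := by rintro rfl; exact hp ha
  have hbq : b ≠ q.2 := by rintro rfl; exact hq hb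
  refine hA (p.1, a) ha (q.1, b) hb ?_
  rw [clauseGraph_adj]
  exact ⟨by simp [Prod.ext_iff]; intro h; exact absurd h h1,
    Or.inl (Or.inr ⟨h1, Or.inr (Or.inr ⟨p.2, q.2, fun h => hap h.symm,
      fun h => hbq h.symm, hlit⟩)⟩)⟩

variable {φ} in
lemma forced_consistent
    (hvars : ∀ i : Fin m, Function.Injective (fun j => (φ i j).var))
    {A : Finset (Fin m × Fin 3)}
    (hA : IndepSet (clauseGraph φ) A)
    (hone : ∀ i : Fin m, ∃! j : Fin 3, (i, j) ∈ A)
    {p q : Fin m × Fin 3} (hvar : (φ p.1 p.2).var = (φ q.1 q.2).var) :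
    forced φ A p = forced φ A q := by
  by_cases h1 : p.1 = q.1
  · have h2 : p.2 = q.2 := by
      apply hvars p.1
      show (φ p.1 p.2).var = (φ p.1 q.2).var
      rw [hvar, h1]
    have : p = q := Prod.ext h1 h2
    rw [this]
  · by_cases hs : (φ p.1 p.2).pos = (φ q.1 q.2).pos
    · -- equal literals
      have hlit : φ p.1 p.2 = φ q.1 q.2 := (Lit.eq_iff _ _).mpr ⟨hvar, hs⟩
      by_cases hp : p ∈ A <;> by_cases hq : q ∈ A
      · simp [forced, hp, hq, hs]
      · exact absurd (no_eq_cross hA hone hp hq h1 hlit) (by simp)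
      · exact absurd (no_eq_cross hA hone hq hp (Ne.symm h1) hlit.symm) (by simp)
      · simp [forced, hp, hq, hs]
    · -- negated literals
      have hpos : (φ p.1 p.2).pos = !(φ q.1 q.2).pos := by
        cases hb : (φ p.1 p.2).pos <;> cases hb' : (φ q.1 q.2).pos <;> simp_all
      have hlit : φ p.1 p.2 = (φ q.1 q.2).neg := by
        rw [Lit.eq_iff]; exact ⟨hvar, hpos⟩
      by_cases hp : p ∈ A <;> by_cases hq : q ∈ A
      · exact absurd (no_neg_in hA hp hq h1 hlit) (by simp)
      · simp [forced, hp, hq, hpos]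
      · simp [forced, hp, hq, hpos]
      · exact absurd (no_neg_out hA hone hp hq h1 hlit) (by simp)

variable {φ} in
lemma bwdAsg_eq_forced
    (hvars : ∀ i : Fin m, Function.Injective (fun j => (φ i j).var))
    {A : Finset (Fin m × Fin 3)}
    (hA : IndepSet (clauseGraph φ) A)
    (hone : ∀ i : Fin m, ∃! j : Fin 3, (i, j) ∈ A)
    (p : Fin m × Fin 3) :
    bwdAsg φ A ((φ p.1 p.2).var) = forced φ A p := by
  by_cases hf : forced φ A p = true
  · rw [hf]
    simp only [bwdAsg, decide_eq_true_iff]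
    exact ⟨p, rfl, hf⟩
  · rw [Bool.not_eq_true] at hf
    rw [hf]
    simp only [bwdAsg, decide_eq_false_iff_not]
    rintro ⟨q, hq, hfq⟩
    rw [forced_consistent hvars hA hone hq, hf] at hfq
    simp at hfq

variable {φ} in
lemma bwd_exactlyOne
    (hvars : ∀ i : Fin m, Function.Injective (fun j => (φ i j).var))
    {A : Finset (Fin m × Fin 3)}
    (hA : IndepSet (clauseGraph φ) A)
    (hone : ∀ i : Fin m, ∃! j : Fin 3, (i, j) ∈ A) :
    ∀ i : Fin m, ∃! j : Fin 3, (φ i j).eval (bwdAsg φ A) = true := by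
  intro i
  obtain ⟨c, hc, huniq⟩ := hone i
  have key : ∀ j : Fin 3, (φ i j).eval (bwdAsg φ A) = true ↔ (i, j) ∈ A := by
    intro j
    rw [Lit.eval_eq_true_iff]
    have := bwdAsg_eq_forced hvars hA hone (i, j)
    rw [this]
    by_cases hj : (i, j) ∈ A <;> simp [forced, hj]
  refine ⟨c, (key c).mpr hc, fun j hj => huniq j ((key j).mp hj)⟩

/-! ### Round trips -/

variable {φ} in
lemma left_inv_aux
    (hocc : ∀ v : Fin n, ∃ i j, (φ i j).var = v)
    {σ : Fin n → Bool}
    (hσ : ∀ i : Fin m, ∃! j : Fin 3, (φ i j).eval σ = true) :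
    bwdAsg φ (fwdSet φ σ) = σ := by
  funext x
  have hforced : ∀ p : Fin m × Fin 3, (φ p.1 p.2).var = x →
      forced φ (fwdSet φ σ) p = σ x := by
    intro p hvar
    by_cases hp : p ∈ fwdSet φ σ
    · have := (mem_fwdSet φ).mp hp
      rw [Lit.eval_eq_true_iff] at this
      simp [forced, hp, ← hvar, this]
    · have : ¬ (φ p.1 p.2).eval σ = true := fun h => hp ((mem_fwdSet φ).mpr h)
      rw [Lit.eval_eq_true_iff] at this
      have : σ (φ p.1 p.2).var = !(φ p.1 p.2).pos := by
        cases h1 : σ (φ p.1 p.2).var <;> cases h2 : (φ p.1 p.2).pos <;> simp_all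
      simp [forced, hp, ← hvar, this]
  obtain ⟨i, j, hij⟩ := hocc x
  cases hx : σ x
  · simp only [bwdAsg, decide_eq_false_iff_not]
    rintro ⟨q, hq, hfq⟩
    rw [hforced q hq, hx] at hfq
    simp at hfq
  · simp only [bwdAsg, decide_eq_true_iff]
    exact ⟨(i, j), hij, by rw [hforced (i, j) hij, hx]⟩

variable {φ} in
lemma right_inv_aux
    (hvars : ∀ i : Fin m, Function.Injective (fun j => (φ i j).var))
    {A : Finset (Fin m × Fin 3)}
    (hA : IndepSet (clauseGraph φ) A)
    (hone : ∀ i : Fin m, ∃! j : Fin 3, (i, j) ∈ A) :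
    fwdSet φ (bwdAsg φ A) = A := by
  ext p
  rw [mem_fwdSet, Lit.eval_eq_true_iff, bwdAsg_eq_forced hvars hA hone p]
  by_cases hp : p ∈ A <;> simp [forced, hp]

end X3Sat

/-- The number of assignments under which exactly one literal in every clause of `φ` is
true equals the number of independent sets of size exactly `m` in the clause-triangle
graph of `φ`. -/
theorem x3sat_eq_indepSets {n m : ℕ} (φ : Fin m → Fin 3 → Lit n)
    (hvars : ∀ i : Fin m, Function.Injective (fun j => (φ i j).var))
    (hocc : ∀ v : Fin n, ∃ i j, (φ i j).var = v) :
    Fintype.card {σ : Fin n → Bool //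
        ∀ i : Fin m, ∃! j : Fin 3, (φ i j).eval σ = true}
      = Fintype.card {A : Finset (Fin m × Fin 3) //
          IndepSet (clauseGraph φ) A ∧ A.card = m} := by
  apply Fintype.card_congr
  exact {
    toFun := fun ⟨σ, hσ⟩ => ⟨X3Sat.fwdSet φ σ,
      X3Sat.fwd_indep φ hσ, X3Sat.fwd_card φ hσ⟩
    invFun := fun ⟨A, hA, hcard⟩ => ⟨X3Sat.bwdAsg φ A,
      X3Sat.bwd_exactlyOne hvars hA (X3Sat.exists_unique_mem hA hcard)⟩
    left_inv := fun ⟨σ, hσ⟩ => Subtype.ext (X3Sat.left_inv_aux hocc hσ)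
    right_inv := fun ⟨A, hA, hcard⟩ => Subtype.ext
      (X3Sat.right_inv_aux hvars hA (X3Sat.exists_unique_mem hA hcard))
  }
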